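/- Let X ⊆ ℝⁿ be closed (and nonempty) and F : X → ℝ be asymmetrically (λ, μ)-Lipschitz continuous. Then there exists an extension F̃ : ℝⁿ → ℝ with F̃ = F on X that is asymmetrically (λ, μ)-Lipschitz continuous on all of ℝⁿ. -/
import Mathlib


/-- The asymmetric distance on `ℝ`: `d_{λ,μ}(t) = λt` for `t ≥ 0` and `-μt` for `t < 0`. -/
noncomputable def dAs (lam mu t : ℝ) : ℝ := if 0 ≤ t then lam * t else -(mu * t)

/-- The asymmetric distance on `ℝⁿ`: `d_{λ,μ}(x,y) = ∑ᵢ d_{λ,μ}(xᵢ - yᵢ)`. -/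
noncomputable def dAsV {n : ℕ} (lam mu : ℝ) (x y : Fin n → ℝ) : ℝ :=
  ∑ i, dAs lam mu (x i - y i)

/-- `F` is asymmetrically `(λ,μ)`-Lipschitz continuous on `X`. -/
def AsymLipschitzOn {n : ℕ} (lam mu : ℝ) (F : (Fin n → ℝ) → ℝ) (X : Set (Fin n → ℝ)) : Prop :=
  ∀ x ∈ X, ∀ y ∈ X, F x - F y ≤ dAsV lam mu x y

lemma dAs_eq_max {lam mu : ℝ} (hlam : 0 < lam) (hmu : 0 < mu) (t : ℝ) :
    dAs lam mu t = max (lam * t) (-(mu * t)) := by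
  unfold dAs
  split_ifs with h
  · rw [max_eq_left]; nlinarith
  · rw [max_eq_right]; nlinarith [le_of_not_ge h]

lemma dAs_add_le {lam mu : ℝ} (hlam : 0 < lam) (hmu : 0 < mu) (a b : ℝ) :
    dAs lam mu (a + b) ≤ dAs lam mu a + dAs lam mu b := by
  rw [dAs_eq_max hlam hmu, dAs_eq_max hlam hmu, dAs_eq_max hlam hmu]
  apply max_le
  · have := le_max_left (lam * a) (-(mu * a))
    have := le_max_left (lam * b) (-(mu * b))
    nlinarith
  · have := le_max_right (lam * a) (-(mu * a))
    have := le_max_right (lam * b) (-(mu * b))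
    nlinarith

lemma dAsV_triangle {n : ℕ} {lam mu : ℝ} (hlam : 0 < lam) (hmu : 0 < mu)
    (x y z : Fin n → ℝ) : dAsV lam mu x z ≤ dAsV lam mu x y + dAsV lam mu y z := by
  unfold dAsV
  rw [← Finset.sum_add_distrib]
  apply Finset.sum_le_sum
  intro i _
  have : x i - z i = (x i - y i) + (y i - z i) := by ring
  rw [this]
  exact dAs_add_le hlam hmu _ _

lemma dAsV_self {n : ℕ} (lam mu : ℝ) (x : Fin n → ℝ) : dAsV lam mu x x = 0 := by
  unfold dAsV dAs
  simp

/-- Extension of asymmetrically Lipschitz functions from a closed nonempty set to `ℝⁿ`. -/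
theorem stmt4 (n : ℕ) (lam mu : ℝ) (hlam : 0 < lam) (hmu : 0 < mu)
    (X : Set (Fin n → ℝ)) (hX : IsClosed X) (hne : X.Nonempty)
    (F : (Fin n → ℝ) → ℝ) (hF : AsymLipschitzOn lam mu F X) :
    ∃ G : (Fin n → ℝ) → ℝ, (∀ x ∈ X, G x = F x) ∧
      AsymLipschitzOn lam mu G Set.univ := by
  obtain ⟨y₀, hy₀⟩ := hne
  set S : (Fin n → ℝ) → Set ℝ := fun x => (fun y => F y + dAsV lam mu x y) '' X with hS
  have hSne : ∀ x, (S x).Nonempty := fun x => ⟨_, ⟨y₀, hy₀, rfl⟩⟩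
  have hbdd : ∀ x, BddBelow (S x) := by
    intro x
    refine ⟨F y₀ - dAsV lam mu y₀ x, ?_⟩
    rintro _ ⟨y, hy, rfl⟩
    dsimp only
    have h1 : F y₀ - F y ≤ dAsV lam mu y₀ y := hF y₀ hy₀ y hy
    have h2 : dAsV lam mu y₀ y ≤ dAsV lam mu y₀ x + dAsV lam mu x y :=
      dAsV_triangle hlam hmu _ _ _
    linarith
  refine ⟨fun x => sInf (S x), ?_, ?_⟩
  · intro x hx
    apply le_antisymm
    · apply csInf_le (hbdd x)
      exact ⟨x, hx, by dsimp only; rw [dAsV_self]; ring⟩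
    · apply le_csInf (hSne x)
      rintro _ ⟨y, hy, rfl⟩
      dsimp only
      have := hF x hx y hy
      linarith
  · intro x _ z _
    dsimp only
    rw [sub_le_iff_le_add, ← sub_le_iff_le_add']
    apply le_csInf (hSne z)
    rintro _ ⟨y, hy, rfl⟩
    dsimp only
    rw [sub_le_iff_le_add']
    have h1 : sInf (S x) ≤ F y + dAsV lam mu x y := csInf_le (hbdd x) ⟨y, hy, rfl⟩
    have h2 : dAsV lam mu x y ≤ dAsV lam mu x z + dAsV lam mu z y :=
      dAsV_triangle hlam hmu _ _ _
    linarith
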